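/- Let f : [-R,0] → ℝ be nonnegative and concave, β > -1/2, t ∈ (-R, 0), and s(t) = ∫_t^0 f(x) dx. Then 2^{-(2β+5)} a₀(β) s(t)/|t|^{2β+5} ≤ a₀(β) ∫_{-R}^0 f(x)/|t+x|^{2β+5} dx ≤ a₀(β)(1 + a₊(β)/a₋(β)) s(t)/|t|^{2β+5}, where a₀(β) = ∫₀^∞ τ^{2β+4} e^{-2τ} dτ, a₊(β) = ∫₁^∞ τ/(1+τ)^{2β+5} dτ, a₋(β) = ∫₀^1 τ/(1+τ)^{2β+5} dτ. -/

import Mathlib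

/-!
Split the kernel integral at `x = t`. On `[t, 0]` the distance `|t + x|` lies between `|t|` and
`2|t|`, which gives the lower bound and the near half of the upper bound. On `[-R, t]`, concavity
and `f 0 ≥ 0` keep `f` below the line through the origin and `(t, f t)`; substituting `x = tσ`
bounds this far part by `|t| f(t) a₊ / |t|^p`, and `|t| f(t) ≤ 2 s ≤ s / a₋` because the area `s`
dominates the triangle under that chord and `a₋ ≤ 1/2`.
-/

open Set intervalIntegral MeasureTheory

namespace ConcaveOn

theorem smul_le_apply_smul {E : Type*} [AddCommGroup E] [Module ℝ E] {s : Set E} {f : E → ℝ}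
    (hf : ConcaveOn ℝ s f) (h0 : 0 ∈ s) (hf0 : 0 ≤ f 0) {x : E} (hx : x ∈ s) {c : ℝ}
    (hc0 : 0 ≤ c) (hc1 : c ≤ 1) : c • f x ≤ f (c • x) := by
  have h := hf.2 hx h0 hc0 (sub_nonneg.2 hc1) (add_sub_cancel c 1)
  simp only [smul_zero, add_zero] at h
  exact le_trans (le_add_of_nonneg_right (smul_nonneg (sub_nonneg.2 hc1) hf0)) h

variable {f : ℝ → ℝ}

theorem mul_div_le_apply {s : Set ℝ} (hf : ConcaveOn ℝ s f) (h0 : 0 ∈ s) (hf0 : 0 ≤ f 0)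
    {t x : ℝ} (ht : t ∈ s) (ht0 : t < 0) (htx : t ≤ x) (hx0 : x ≤ 0) : f t * (x / t) ≤ f x := by
  have h := hf.smul_le_apply_smul h0 hf0 ht (div_nonneg_of_nonpos hx0 ht0.le)
    ((div_le_one_of_neg ht0).2 htx)
  rwa [smul_eq_mul, smul_eq_mul, div_mul_cancel₀ x ht0.ne, mul_comm] at h

theorem apply_le_mul_div {s : Set ℝ} (hf : ConcaveOn ℝ s f) (h0 : 0 ∈ s) (hf0 : 0 ≤ f 0)
    {t x : ℝ} (hx : x ∈ s) (hxt : x ≤ t) (ht0 : t < 0) : f x ≤ f t * (x / t) := by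
  have hx0 : x < 0 := hxt.trans_lt ht0
  have hc : 0 < t / x := div_pos_of_neg_of_neg ht0 hx0
  have h := hf.smul_le_apply_smul h0 hf0 hx hc.le ((div_le_one_of_neg hx0).2 hxt)
  rw [smul_eq_mul, smul_eq_mul, div_mul_cancel₀ t hx0.ne, ← le_div_iff₀' hc] at h
  rwa [div_div_eq_mul_div, mul_div_assoc] at h

theorem intervalIntegrable {a b : ℝ} (hf : ConcaveOn ℝ (Icc a b) f) (hab : a ≤ b) :
    IntervalIntegrable f volume a b := by
  set m := min (f a) (f b)
  have hbound : ∀ x ∈ Icc a b, ‖f x‖ ≤ max |m| |2 * f ((a + b) / 2) - m| := by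
    intro x hx
    have hx' : a + b - x ∈ Icc a b := ⟨by linarith [hx.2], by linarith [hx.1]⟩
    have hlow : ∀ y ∈ Icc a b, m ≤ f y := fun y hy ↦
      hf.min_le_of_mem_Icc (left_mem_Icc.2 hab) (right_mem_Icc.2 hab) hy
    have hmid := hf.2 hx hx' (by norm_num : (0:ℝ) ≤ 1 / 2) (by norm_num : (0:ℝ) ≤ 1 / 2)
      (by norm_num)
    rw [smul_eq_mul, smul_eq_mul, smul_eq_mul, smul_eq_mul,
      show 1 / 2 * x + 1 / 2 * (a + b - x) = (a + b) / 2 by ring] at hmid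
    exact abs_le_max_abs_abs (hlow x hx) (by linarith [hlow _ hx'])
  rw [intervalIntegrable_iff_integrableOn_Ioo_of_le hab]
  refine Integrable.mono' (integrable_const _) ?_
    (ae_restrict_of_forall_mem measurableSet_Ioo fun x hx ↦ hbound x (Ioo_subset_Icc_self hx))
  exact ((hf.subset Ioo_subset_Icc_self (convex_Ioo a b)).continuousOn isOpen_Ioo)
    |>.aestronglyMeasurable measurableSet_Ioo

theorem neg_mul_apply_le_two_mul_integral {t : ℝ} (hf : ConcaveOn ℝ (Icc t 0) f)
    (hf0 : 0 ≤ f 0) (ht : t < 0) : -t * f t ≤ 2 * ∫ x in t..0, f x := by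
  have h0 : (0:ℝ) ∈ Icc t 0 := right_mem_Icc.2 ht.le
  have hchord : ∫ x in t..0, f t * (x / t) ≤ ∫ x in t..0, f x :=
    integral_mono_on ht.le (Continuous.intervalIntegrable (by fun_prop) _ _)
      (hf.intervalIntegrable ht.le) fun x hx ↦
      hf.mul_div_le_apply h0 hf0 (left_mem_Icc.2 ht.le) ht hx.1 hx.2
  rw [intervalIntegral.integral_const_mul, intervalIntegral.integral_div, integral_id] at hchord
  have : f t * ((0 ^ 2 - t ^ 2) / 2 / t) = -t * f t / 2 := by
    field_simp [ht.ne]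
    ring
  linarith

end ConcaveOn

theorem continuousOn_div_one_add_rpow (p : ℝ) :
    ContinuousOn (fun τ : ℝ ↦ τ / (1 + τ) ^ p) (Ioi (-1)) := by
  have hpos : ∀ τ ∈ Ioi (-1 : ℝ), 0 < 1 + τ := fun τ hτ ↦ by linarith [mem_Ioi.1 hτ]
  exact continuousOn_id.div (ContinuousOn.rpow_const (by fun_prop) fun τ hτ ↦
    Or.inl (hpos τ hτ).ne') fun τ hτ ↦ (Real.rpow_pos_of_pos (hpos τ hτ) p).ne'

theorem intervalIntegrable_div_one_add_rpow (p : ℝ) {a b : ℝ} (ha : 0 ≤ a) (hb : 0 ≤ b) :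
    IntervalIntegrable (fun τ : ℝ ↦ τ / (1 + τ) ^ p) volume a b :=
  ((continuousOn_div_one_add_rpow p).mono fun _ hτ ↦
    mem_Ioi.2 (by linarith [(le_inf ha hb).trans hτ.1])).intervalIntegrable

theorem integral_div_one_add_rpow_pos (p : ℝ) : 0 < ∫ τ in (0:ℝ)..1, τ / (1 + τ) ^ p :=
  intervalIntegral_pos_of_pos_on (intervalIntegrable_div_one_add_rpow p le_rfl zero_le_one)
    (fun τ hτ ↦ div_pos hτ.1 (Real.rpow_pos_of_pos (by linarith [hτ.1]) p)) one_pos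

theorem integral_div_one_add_rpow_le_half {p : ℝ} (hp : 0 ≤ p) :
    ∫ τ in (0:ℝ)..1, τ / (1 + τ) ^ p ≤ 1 / 2 := by
  calc ∫ τ in (0:ℝ)..1, τ / (1 + τ) ^ p ≤ ∫ τ in (0:ℝ)..1, τ :=
        integral_mono_on zero_le_one (intervalIntegrable_div_one_add_rpow p le_rfl zero_le_one)
          intervalIntegrable_id fun τ hτ ↦
            div_le_self hτ.1 (Real.one_le_rpow (by linarith [hτ.1]) hp)
    _ = 1 / 2 := by norm_num [integral_id]

theorem integrableOn_Ioi_div_one_add_rpow {p : ℝ} (hp : 2 < p) :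
    IntegrableOn (fun τ : ℝ ↦ τ / (1 + τ) ^ p) (Ioi 1) := by
  refine Integrable.mono' (integrableOn_Ioi_rpow_of_lt (by linarith : 1 - p < -1) one_pos)
    (((continuousOn_div_one_add_rpow p).mono fun τ hτ ↦ ?_).aestronglyMeasurable
      measurableSet_Ioi) ?_
  · exact mem_Ioi.2 (by linarith [mem_Ioi.1 hτ])
  refine ae_restrict_of_forall_mem measurableSet_Ioi fun τ hτ ↦ ?_
  have hτ0 : 0 < τ := by linarith [mem_Ioi.1 hτ]
  rw [Real.norm_of_nonneg (div_nonneg hτ0.le (Real.rpow_nonneg (by linarith) p)),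
    Real.rpow_sub hτ0, Real.rpow_one]
  exact div_le_div_of_nonneg_left hτ0.le (Real.rpow_pos_of_pos hτ0 p)
    (Real.rpow_le_rpow hτ0.le (by linarith) (by linarith))

theorem integral_div_one_add_rpow_le_integral_Ioi {p T : ℝ} (hp : 2 < p) (hT : 1 ≤ T) :
    ∫ τ in (1:ℝ)..T, τ / (1 + τ) ^ p ≤ ∫ τ in Ioi (1:ℝ), τ / (1 + τ) ^ p := by
  rw [intervalIntegral.integral_of_le hT]
  refine setIntegral_mono_set (integrableOn_Ioi_div_one_add_rpow hp)
    (ae_restrict_of_forall_mem measurableSet_Ioi fun τ hτ ↦ ?_) Ioc_subset_Ioi_self.eventuallyLE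
  have hτ0 : 0 < τ := by linarith [mem_Ioi.1 hτ]
  exact div_nonneg hτ0.le (Real.rpow_nonneg (by linarith) p)

theorem IntervalIntegrable.div_abs_add_rpow {f : ℝ → ℝ} {a b : ℝ}
    (hf : IntervalIntegrable f volume a b) (t p : ℝ) (ht : ∀ x ∈ uIcc a b, t + x ≠ 0) :
    IntervalIntegrable (fun x ↦ f x / |t + x| ^ p) volume a b := by
  have hk : ContinuousOn (fun x ↦ (|t + x| ^ p)⁻¹) (uIcc a b) :=
    ((continuousOn_const.add continuousOn_id).abs.rpow_const fun x hx ↦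
      Or.inl (abs_ne_zero.2 (ht x hx))).inv₀ fun x hx ↦
        (Real.rpow_pos_of_pos (abs_pos.2 (ht x hx)) p).ne'
  simpa only [div_eq_mul_inv] using hf.mul_continuousOn hk

theorem integral_div_div_abs_add_rpow {a t : ℝ} (p : ℝ) (ht : t < 0) (hat : a ≤ t) :
    ∫ x in a..t, x / t / |t + x| ^ p = |t| * (∫ σ in (1:ℝ)..a / t, σ / (1 + σ) ^ p) / |t| ^ p := by
  have hat' : 1 ≤ a / t := (one_le_div_of_neg ht).2 hat
  have hscale : ∀ σ ∈ uIcc 1 (a / t), σ / |t + t * σ| ^ p = σ / (1 + σ) ^ p / |t| ^ p := by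
    intro σ hσ
    rw [uIcc_of_le hat'] at hσ
    rw [show t + t * σ = t * (1 + σ) by ring, abs_mul, abs_of_pos (by linarith [hσ.1] : 0 < 1 + σ),
      Real.mul_rpow (abs_nonneg t) (by linarith [hσ.1])]
    ring
  calc ∫ x in a..t, x / t / |t + x| ^ p
      = ∫ x in a..t, (fun σ ↦ σ / |t + t * σ| ^ p) (x / t) := by
        simp only [mul_div_cancel₀ _ ht.ne]
    _ = t * ∫ σ in a / t..1, σ / |t + t * σ| ^ p := by
        rw [integral_comp_div (fun σ ↦ σ / |t + t * σ| ^ p) ht.ne, div_self ht.ne, smul_eq_mul]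
    _ = t * -∫ σ in (1:ℝ)..a / t, σ / (1 + σ) ^ p / |t| ^ p := by
        rw [integral_symm, integral_congr hscale]
    _ = |t| * (∫ σ in (1:ℝ)..a / t, σ / (1 + σ) ^ p) / |t| ^ p := by
        rw [intervalIntegral.integral_div, abs_of_neg ht]
        ring

section KernelBounds

variable {f : ℝ → ℝ} {R t p : ℝ}

theorem integral_div_abs_add_rpow_le_div (hf : IntervalIntegrable f volume t 0)
    (hf0 : ∀ x ∈ Icc t 0, 0 ≤ f x) (ht : t < 0) (hp : 0 ≤ p) :
    ∫ x in t..0, f x / |t + x| ^ p ≤ (∫ x in t..0, f x) / |t| ^ p := by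
  rw [← intervalIntegral.integral_div]
  refine integral_mono_on ht.le (hf.div_abs_add_rpow t p fun x hx ↦ ?_) (hf.div_const _)
    fun x hx ↦ div_le_div_of_nonneg_left (hf0 x hx) (Real.rpow_pos_of_pos (abs_pos.2 ht.ne) p)
      (Real.rpow_le_rpow (abs_nonneg t) ?_ hp)
  · rw [uIcc_of_le ht.le] at hx
    linarith [hx.2]
  · rw [abs_of_neg ht, abs_of_neg (by linarith [hx.2])]
    linarith [hx.2]

theorem div_le_integral_div_abs_add_rpow (hf : IntervalIntegrable f volume t 0)
    (hf0 : ∀ x ∈ Icc t 0, 0 ≤ f x) (ht : t < 0) (hp : 0 ≤ p) :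
    2 ^ (-p) * (∫ x in t..0, f x) / |t| ^ p ≤ ∫ x in t..0, f x / |t + x| ^ p := by
  have hscale : 2 ^ (-p) * (∫ x in t..0, f x) / |t| ^ p = (∫ x in t..0, f x) / (2 * |t|) ^ p := by
    rw [Real.mul_rpow zero_le_two (abs_nonneg t), Real.rpow_neg zero_le_two]
    ring
  rw [hscale, ← intervalIntegral.integral_div]
  refine integral_mono_on ht.le (hf.div_const _) (hf.div_abs_add_rpow t p fun x hx ↦ ?_)
    fun x hx ↦ div_le_div_of_nonneg_left (hf0 x hx) (Real.rpow_pos_of_pos ?_ p)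
      (Real.rpow_le_rpow (abs_nonneg _) ?_ hp)
  · rw [uIcc_of_le ht.le] at hx
    linarith [hx.2]
  · exact abs_pos.2 (by linarith [hx.2])
  · rw [abs_of_neg ht, abs_of_neg (by linarith [hx.2])]
    linarith [hx.1]

theorem ConcaveOn.integral_div_abs_add_rpow_le_chord (hf : ConcaveOn ℝ (Icc (-R) 0) f)
    (hf0 : 0 ≤ f 0) (hRt : -R ≤ t) (ht : t < 0) :
    ∫ x in (-R)..t, f x / |t + x| ^ p
      ≤ f t * |t| * (∫ σ in (1:ℝ)..(-R) / t, σ / (1 + σ) ^ p) / |t| ^ p := by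
  have h0 : (0:ℝ) ∈ Icc (-R) 0 := right_mem_Icc.2 (hRt.trans ht.le)
  have hneg : ∀ x ∈ uIcc (-R) t, t + x ≠ 0 := fun x hx ↦ by
    rw [uIcc_of_le hRt] at hx
    linarith [hx.2]
  calc ∫ x in (-R)..t, f x / |t + x| ^ p ≤ ∫ x in (-R)..t, f t * (x / t / |t + x| ^ p) := by
        refine integral_mono_on hRt (((hf.subset (Icc_subset_Icc_right ht.le) (convex_Icc _ _))
          |>.intervalIntegrable hRt).div_abs_add_rpow t p hneg)
          ((intervalIntegrable_id.div_const t).div_abs_add_rpow t p hneg |>.const_mul _)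
          fun x hx ↦ ?_
        rw [← mul_div_assoc]
        exact div_le_div_of_nonneg_right
          (hf.apply_le_mul_div h0 hf0 ⟨hx.1, hx.2.trans ht.le⟩ hx.2 ht)
          (Real.rpow_nonneg (abs_nonneg _) p)
    _ = f t * |t| * (∫ σ in (1:ℝ)..(-R) / t, σ / (1 + σ) ^ p) / |t| ^ p := by
        rw [intervalIntegral.integral_const_mul, integral_div_div_abs_add_rpow p ht hRt]
        ring

theorem area_le_integral_div_abs_add_rpow (hf : IntervalIntegrable f volume (-R) 0)
    (hf0 : ∀ x ∈ Icc (-R) 0, 0 ≤ f x) (ht : t ∈ Ioo (-R) 0) (hp : 0 ≤ p) :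
    2 ^ (-p) * (∫ x in t..0, f x) / |t| ^ p ≤ ∫ x in (-R)..0, f x / |t + x| ^ p := by
  obtain ⟨hRt, ht0⟩ := ht
  have htmem : t ∈ uIcc (-R) 0 := mem_uIcc_of_le hRt.le ht0.le
  have hF := hf.div_abs_add_rpow t p fun x hx ↦ by
    rw [uIcc_of_le (hRt.trans ht0).le] at hx
    linarith [hx.2]
  have hfar : 0 ≤ ∫ x in (-R)..t, f x / |t + x| ^ p := integral_nonneg hRt.le fun x hx ↦
    div_nonneg (hf0 x ⟨hx.1, hx.2.trans ht0.le⟩) (Real.rpow_nonneg (abs_nonneg _) p)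
  have hnear := div_le_integral_div_abs_add_rpow
    (hf.mono_set (uIcc_subset_uIcc htmem right_mem_uIcc))
    (fun x hx ↦ hf0 x ⟨hRt.le.trans hx.1, hx.2⟩) ht0 hp
  rw [← integral_add_adjacent_intervals (hF.mono_set (uIcc_subset_uIcc left_mem_uIcc htmem))
    (hF.mono_set (uIcc_subset_uIcc htmem right_mem_uIcc))]
  linarith

theorem ConcaveOn.integral_div_abs_add_rpow_le_area (hf : ConcaveOn ℝ (Icc (-R) 0) f)
    (hf0 : ∀ x ∈ Icc (-R) 0, 0 ≤ f x) (ht : t ∈ Ioo (-R) 0) (hp : 2 < p) :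
    ∫ x in (-R)..0, f x / |t + x| ^ p
      ≤ (1 + (∫ τ in Ioi (1:ℝ), τ / (1 + τ) ^ p) / ∫ τ in (0:ℝ)..1, τ / (1 + τ) ^ p)
        * (∫ x in t..0, f x) / |t| ^ p := by
  obtain ⟨hRt, ht0⟩ := ht
  set A := ∫ τ in Ioi (1:ℝ), τ / (1 + τ) ^ p
  set a := ∫ τ in (0:ℝ)..1, τ / (1 + τ) ^ p
  set s := ∫ x in t..0, f x
  have hR0 : -R ≤ 0 := (hRt.trans ht0).le
  have htmem : t ∈ uIcc (-R) 0 := mem_uIcc_of_le hRt.le ht0.le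
  have hF := (hf.intervalIntegrable hR0).div_abs_add_rpow t p fun x hx ↦ by
    rw [uIcc_of_le hR0] at hx
    linarith [hx.2]
  have hft : 0 ≤ f t := hf0 t ⟨hRt.le, ht0.le⟩
  have hA : 0 ≤ A := setIntegral_nonneg measurableSet_Ioi fun τ hτ ↦
    div_nonneg (by linarith [mem_Ioi.1 hτ]) (Real.rpow_nonneg (by linarith [mem_Ioi.1 hτ]) p)
  have ha : 0 < a := integral_div_one_add_rpow_pos p
  have hnear : ∫ x in t..0, f x / |t + x| ^ p ≤ s / |t| ^ p :=
    integral_div_abs_add_rpow_le_div ((hf.subset (Icc_subset_Icc_left hRt.le) (convex_Icc _ _))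
      |>.intervalIntegrable ht0.le) (fun x hx ↦ hf0 x ⟨hRt.le.trans hx.1, hx.2⟩) ht0 (by linarith)
  have hchord : f t * |t| ≤ s / a := by
    rw [le_div_iff₀ ha, abs_of_neg ht0]
    have harea : -t * f t ≤ 2 * s := (hf.subset (Icc_subset_Icc_left hRt.le) (convex_Icc _ _))
      |>.neg_mul_apply_le_two_mul_integral (hf0 0 (right_mem_Icc.2 hR0)) ht0
    nlinarith [mul_le_mul_of_nonneg_left (integral_div_one_add_rpow_le_half (by linarith : 0 ≤ p))
      (mul_nonneg hft (neg_nonneg.2 ht0.le))]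
  have hfar : ∫ x in (-R)..t, f x / |t + x| ^ p ≤ A / a * s / |t| ^ p := by
    calc ∫ x in (-R)..t, f x / |t + x| ^ p
        ≤ f t * |t| * (∫ σ in (1:ℝ)..(-R) / t, σ / (1 + σ) ^ p) / |t| ^ p :=
          hf.integral_div_abs_add_rpow_le_chord (hf0 0 (right_mem_Icc.2 hR0)) hRt.le ht0
      _ ≤ f t * |t| * A / |t| ^ p := by
          gcongr
          exact integral_div_one_add_rpow_le_integral_Ioi hp ((one_le_div_of_neg ht0).2 hRt.le)
      _ ≤ A / a * s / |t| ^ p := by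
          refine div_le_div_of_nonneg_right ?_ (Real.rpow_nonneg (abs_nonneg t) p)
          calc f t * |t| * A = A * (f t * |t|) := by ring
            _ ≤ A * (s / a) := by gcongr
            _ = A / a * s := by ring
  rw [← integral_add_adjacent_intervals (hF.mono_set (uIcc_subset_uIcc left_mem_uIcc htmem))
    (hF.mono_set (uIcc_subset_uIcc htmem right_mem_uIcc))]
  calc _ ≤ A / a * s / |t| ^ p + s / |t| ^ p := add_le_add hfar hnear
    _ = (1 + A / a) * s / |t| ^ p := by ring

end KernelBounds

theorem kernel_comparable_to_area_general
    (R β t : ℝ) (hβ : -1/2 < β) (ht : t ∈ Ioo (-R) 0)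
    (f : ℝ → ℝ)
    (hconc : ConcaveOn ℝ (Icc (-R) 0) f)
    (hnonneg : ∀ x ∈ Icc (-R) 0, 0 ≤ f x)
    (s a₀ aplus aminus : ℝ)
    (hs : s = ∫ x in t..(0:ℝ), f x)
    (ha₀ : a₀ = ∫ τ in Ioi (0:ℝ), τ ^ (2*β+4) * Real.exp (-2*τ))
    (haplus : aplus = ∫ τ in Ioi (1:ℝ), τ / (1+τ)^(2*β+5))
    (haminus : aminus = ∫ τ in (0:ℝ)..1, τ / (1+τ)^(2*β+5)) :
    2 ^ (-(2*β+5)) * a₀ * s / |t| ^ (2*β+5)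
      ≤ a₀ * ∫ x in (-R)..(0:ℝ), f x / |t+x| ^ (2*β+5) ∧
    a₀ * (∫ x in (-R)..(0:ℝ), f x / |t+x| ^ (2*β+5))
      ≤ a₀ * (1 + aplus / aminus) * s / |t| ^ (2*β+5) := by
  have ha₀_nonneg : 0 ≤ a₀ := ha₀ ▸ setIntegral_nonneg measurableSet_Ioi fun τ hτ ↦
    mul_nonneg (Real.rpow_nonneg (le_of_lt hτ) _) (Real.exp_nonneg _)
  subst hs haplus haminus
  have hlow := area_le_integral_div_abs_add_rpow (hconc.intervalIntegrable (ht.1.trans ht.2).le)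
    hnonneg ht (by linarith : 0 ≤ 2 * β + 5)
  have hup := hconc.integral_div_abs_add_rpow_le_area hnonneg ht (by linarith : 2 < 2 * β + 5)
  constructor
  · calc _ = a₀ * (2 ^ (-(2 * β + 5)) * (∫ x in t..0, f x) / |t| ^ (2 * β + 5)) := by ring
      _ ≤ _ := mul_le_mul_of_nonneg_left hlow ha₀_nonneg
  · calc _ ≤ a₀ * ((1 + _ / _) * (∫ x in t..0, f x) / |t| ^ (2 * β + 5)) :=
          mul_le_mul_of_nonneg_left hup ha₀_nonneg
      _ = _ := by ring

/-- Lemma 2 core estimate: for `f` nonnegative concave on `[-R,0]`, `β > -1/2`,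
`t ∈ (-R,0)` and `s(t) = ∫_t^0 f`, the integral `a₀(β)∫_{-R}^0 f(x)/|t+x|^{2β+5}dx`
is comparable to `s(t)/|t|^{2β+5}`. -/
theorem kernel_comparable_to_area
    (R β t : ℝ) (hR : 0 < R) (hβ : -1/2 < β) (ht : t ∈ Ioo (-R) 0)
    (f : ℝ → ℝ)
    (hconc : ConcaveOn ℝ (Icc (-R) 0) f)
    (hnonneg : ∀ x ∈ Icc (-R) 0, 0 ≤ f x)
    (s a₀ aplus aminus : ℝ)
    (hs : s = ∫ x in t..(0:ℝ), f x)
    (ha₀ : a₀ = ∫ τ in Ioi (0:ℝ), τ ^ (2*β+4) * Real.exp (-2*τ))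
    (haplus : aplus = ∫ τ in Ioi (1:ℝ), τ / (1+τ)^(2*β+5))
    (haminus : aminus = ∫ τ in (0:ℝ)..1, τ / (1+τ)^(2*β+5)) :
    2 ^ (-(2*β+5)) * a₀ * s / |t| ^ (2*β+5)
      ≤ a₀ * ∫ x in (-R)..(0:ℝ), f x / |t+x| ^ (2*β+5) ∧
    a₀ * (∫ x in (-R)..(0:ℝ), f x / |t+x| ^ (2*β+5))
      ≤ a₀ * (1 + aplus / aminus) * s / |t| ^ (2*β+5) :=
  kernel_comparable_to_area_general R β t hβ ht f hconc hnonneg s a₀ aplus aminus hs ha₀ haplus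
    haminus
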